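/- arXiv:2605.01073 — 4 statements merged into one kernel-verified Lean document; each statement's English description precedes it below -/
import Mathlib

section
/- Let Z = {z_1, ..., z_N} be a finite nonempty set of points in a real inner product space (e.g. ℝ^r), let a be a reference point such that d_Z(a) = dist(a, conv(Z)) > 0, and let D_Z = diam(Z) = max_{i,j} ‖z_i − z_j‖ be the Euclidean diameter of Z. If D_Z ≤ 2·d_Z(a), then for every point v in the convex hull conv(Z) with v ≠ a and every j = 1, ..., N, the angle between the vectors v − a and z_j − a satisfies ∠(v − a, z_j − a) ≤ 2·arcsin(D_Z / (2·d_Z(a))). -/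
open Metric InnerProductGeometry

/-- Barycentric angular stability: if a finite nonempty cloud `Z` in a real inner
product space is separated from the reference point `a` (positive distance to the
convex hull) and its diameter satisfies `D_Z ≤ 2 · d_Z(a)`, then for every point
`v` of the convex hull with `v ≠ a` and every `z ∈ Z`, the angle between `v − a`
and `z − a` is at most `2 · arcsin(D_Z / (2 · d_Z(a)))`. -/
theorem barycentric_angular_stability
    {E : Type*} [NormedAddCommGroup E] [InnerProductSpace ℝ E]
    (Z : Finset E) (hZ : Z.Nonempty) (a : E)
    (hd : 0 < infDist a (convexHull ℝ (Z : Set E)))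
    (hD : diam (Z : Set E) ≤ 2 * infDist a (convexHull ℝ (Z : Set E))) :
    ∀ v ∈ convexHull ℝ (Z : Set E), v ≠ a → ∀ z ∈ Z,
      angle (v - a) (z - a) ≤
        2 * Real.arcsin
          (diam (Z : Set E) / (2 * infDist a (convexHull ℝ (Z : Set E)))) := by
  intro v hv hva z hz
  set d := infDist a (convexHull ℝ (Z : Set E)) with hdef
  set D := diam (Z : Set E) with hDdef
  have hD0 : 0 ≤ D := diam_nonneg
  have hz' : z ∈ convexHull ℝ (Z : Set E) := subset_convexHull ℝ _ hz
  have hbd : Bornology.IsBounded (convexHull ℝ (Z : Set E)) :=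
    isBounded_convexHull.mpr Z.finite_toSet.isBounded
  have hx : d ≤ ‖v - a‖ := by
    have := infDist_le_dist_of_mem (x := a) hv
    rwa [dist_comm, dist_eq_norm] at this
  have hy : d ≤ ‖z - a‖ := by
    have := infDist_le_dist_of_mem (x := a) hz'
    rwa [dist_comm, dist_eq_norm] at this
  have hvz : ‖v - z‖ ≤ D := by
    have h1 : dist v z ≤ diam (convexHull ℝ (Z : Set E)) :=
      dist_le_diam_of_mem hbd hv hz'
    rw [convexHull_diam] at h1
    rwa [dist_eq_norm] at h1
  set θ := angle (v - a) (z - a) with hθdef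
  have hθ0 : 0 ≤ θ := angle_nonneg _ _
  have hθπ : θ ≤ Real.pi := angle_le_pi _ _
  have hcos : Real.cos θ * (‖v - a‖ * ‖z - a‖) = inner ℝ (v - a) (z - a) :=
    cos_angle_mul_norm_mul_norm _ _
  have hlaw : ‖v - z‖ ^ 2
      = ‖v - a‖ ^ 2 - 2 * inner ℝ (v - a) (z - a) + ‖z - a‖ ^ 2 := by
    have h : v - z = (v - a) - (z - a) := by abel
    rw [h, @norm_sub_sq_real]
  -- half-angle identity
  have hhalf : Real.cos θ = 1 - 2 * Real.sin (θ / 2) ^ 2 := by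
    have h2 : Real.cos (2 * (θ / 2)) = 1 - 2 * Real.sin (θ / 2) ^ 2 := by
      rw [Real.cos_two_mul]
      have := Real.sin_sq_add_cos_sq (θ / 2)
      nlinarith
    rwa [show 2 * (θ / 2) = θ by ring] at h2
  have hsin0 : 0 ≤ Real.sin (θ / 2) := by
    apply Real.sin_nonneg_of_nonneg_of_le_pi
    · linarith
    · linarith [Real.pi_pos]
  -- key: (2 * d * sin(θ/2))^2 ≤ D^2
  have hkey : (2 * d * Real.sin (θ / 2)) ^ 2 ≤ D ^ 2 := by
    have hcosle : Real.cos θ ≤ 1 := Real.cos_le_one θ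
    have hxy : d * d ≤ ‖v - a‖ * ‖z - a‖ :=
      mul_le_mul hx hy hd.le (norm_nonneg _)
    have hsq : ‖v - z‖ ^ 2 ≤ D ^ 2 := by
      apply pow_le_pow_left₀ (norm_nonneg _) hvz
    nlinarith [sq_nonneg (‖v - a‖ - ‖z - a‖), sq_nonneg (Real.sin (θ / 2))]
  have hsinle : Real.sin (θ / 2) ≤ D / (2 * d) := by
    have h2d : 0 < 2 * d := by linarith
    rw [le_div_iff₀ h2d]
    have h1 : 0 ≤ 2 * d * Real.sin (θ / 2) := by positivity
    nlinarith
  have harc : θ / 2 ≤ Real.arcsin (D / (2 * d)) := by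
    calc θ / 2 = Real.arcsin (Real.sin (θ / 2)) := by
          rw [Real.arcsin_sin (by linarith [Real.pi_pos]) (by linarith)]
      _ ≤ Real.arcsin (D / (2 * d)) := Real.monotone_arcsin hsinle
  linarith
end

section
/- Let Z = {z_1, ..., z_N} be a finite nonempty set of points in a real inner product space (e.g. ℝ^r), let a be a reference point such that d_Z(a) = dist(a, conv(Z)) > 0, let D_Z = diam(Z), and assume D_Z ≤ 2·d_Z(a). Define the angular diameter of a finite set W with respect to a as α_W(a) = max over pairs w_i, w_j ∈ W of the angle ∠(w_i − a, w_j − a). Then for every barycentric point v ∈ conv(Z) with v ≠ a, the angular diameter of the enlarged cloud satisfies α_{Z ∪ {v}}(a) ≤ max{ α_Z(a), 2·arcsin(D_Z / (2·d_Z(a))) }. -/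
/-!
Every point of `conv(Z)` lies at distance at least `d = d_Z(a)` from `a`, and any two of them are
at distance at most `diam conv(Z) = D_Z`. For `x, y` with `‖x‖, ‖y‖ ≥ d` the law of cosines reads
`‖x - y‖² = (‖x‖ - ‖y‖)² + 4 ‖x‖ ‖y‖ sin² (∠(x, y) / 2) ≥ 4 d² sin² (∠(x, y) / 2)`, so every angle
subtended at `a` by two points of `conv(Z)`, in particular by two points of `Z ∪ {v}`, is at most
`2 arcsin (D_Z / (2 d))`.
-/

open Metric InnerProductGeometry

/-- The angular diameter of a set `W` with respect to a reference point `a`: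
the supremum of the angles `∠(u − a, w − a)` over pairs `u, w ∈ W`. -/
noncomputable def angularDiam {E : Type*} [NormedAddCommGroup E]
    [InnerProductSpace ℝ E] (a : E) (W : Set E) : ℝ :=
  sSup {θ : ℝ | ∃ u ∈ W, ∃ w ∈ W, θ = angle (u - a) (w - a)}

namespace InnerProductGeometry

variable {V : Type*} [NormedAddCommGroup V] [InnerProductSpace ℝ V]

theorem norm_sub_sq_eq_sq_sub_norm_add_four_mul_sin_sq_half_angle (x y : V) :
    ‖x - y‖ ^ 2 = (‖x‖ - ‖y‖) ^ 2 + 4 * ‖x‖ * ‖y‖ * Real.sin (angle x y / 2) ^ 2 := by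
  have hsin : Real.sin (angle x y / 2) ^ 2 = 1 / 2 - Real.cos (angle x y) / 2 := by
    rw [Real.sin_sq_eq_half_sub, mul_div_cancel₀ _ two_ne_zero]
  rw [sq, norm_sub_sq_eq_norm_sq_add_norm_sq_sub_two_mul_norm_mul_norm_mul_cos_angle, hsin]
  ring

theorem two_mul_mul_sin_half_angle_le_norm_sub {x y : V} {d : ℝ} (hd : 0 ≤ d)
    (hx : d ≤ ‖x‖) (hy : d ≤ ‖y‖) :
    2 * d * Real.sin (angle x y / 2) ≤ ‖x - y‖ := by
  have hsin : 0 ≤ Real.sin (angle x y / 2) :=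
    Real.sin_nonneg_of_nonneg_of_le_pi (by linarith [angle_nonneg x y])
      (by linarith [angle_le_pi x y, Real.pi_pos])
  have hdd : d * d ≤ ‖x‖ * ‖y‖ := mul_le_mul hx hy hd (norm_nonneg x)
  have hsq : (2 * d * Real.sin (angle x y / 2)) ^ 2 ≤ ‖x - y‖ ^ 2 := by
    rw [norm_sub_sq_eq_sq_sub_norm_add_four_mul_sin_sq_half_angle]
    nlinarith [sq_nonneg (‖x‖ - ‖y‖), sq_nonneg (Real.sin (angle x y / 2))]
  exact abs_le_of_sq_le_sq' hsq (norm_nonneg _) |>.2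

theorem angle_le_two_mul_arcsin_of_le_norm {x y : V} {d D : ℝ} (hd : 0 < d)
    (hx : d ≤ ‖x‖) (hy : d ≤ ‖y‖) (hxy : ‖x - y‖ ≤ D) :
    angle x y ≤ 2 * Real.arcsin (D / (2 * d)) := by
  have hhalf : angle x y / 2 ≤ Real.arcsin (D / (2 * d)) := by
    rw [Real.le_arcsin_iff_sin_le' ⟨by linarith [angle_nonneg x y, Real.pi_pos],
      by linarith [angle_le_pi x y]⟩, le_div_iff₀ (by positivity)]
    linarith [two_mul_mul_sin_half_angle_le_norm_sub hd.le hx hy]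
  linarith

end InnerProductGeometry

section AngularDiam

variable {E : Type*} [NormedAddCommGroup E] [InnerProductSpace ℝ E]

theorem angularDiam_le {a : E} {W : Set E} {c : ℝ} (hc : 0 ≤ c)
    (h : ∀ u ∈ W, ∀ w ∈ W, angle (u - a) (w - a) ≤ c) :
    angularDiam a W ≤ c :=
  Real.sSup_le (by rintro θ ⟨u, hu, w, hw, rfl⟩; exact h u hu w hw) hc

theorem angularDiam_le_of_subset_convexHull {s W : Set E} {a : E} (hs : Bornology.IsBounded s)
    (ha : 0 < infDist a (convexHull ℝ s)) (hW : W ⊆ convexHull ℝ s) :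
    angularDiam a W ≤ 2 * Real.arcsin (diam s / (2 * infDist a (convexHull ℝ s))) := by
  have hfar : ∀ u ∈ W, infDist a (convexHull ℝ s) ≤ ‖u - a‖ := fun u hu => by
    simpa only [dist_eq_norm, norm_sub_rev] using infDist_le_dist_of_mem (x := a) (hW hu)
  refine angularDiam_le (mul_nonneg zero_le_two (Real.arcsin_nonneg.2 (by positivity)))
    fun u hu w hw => ?_
  refine angle_le_two_mul_arcsin_of_le_norm ha (hfar u hu) (hfar w hw) ?_
  rw [sub_sub_sub_cancel_right, ← dist_eq_norm, ← convexHull_diam s]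
  exact dist_le_diam_of_mem (isBounded_convexHull.2 hs) (hW hu) (hW hw)

end AngularDiam

theorem angularDiam_insert_le_max_general
    {E : Type*} [NormedAddCommGroup E] [InnerProductSpace ℝ E]
    (Z : Finset E) (a : E)
    (hd : 0 < infDist a (convexHull ℝ (Z : Set E)))
    (v : E) (hv : v ∈ convexHull ℝ (Z : Set E)) :
    angularDiam a ((Z : Set E) ∪ {v}) ≤
      max (angularDiam a (Z : Set E))
        (2 * Real.arcsin
          (diam (Z : Set E) / (2 * infDist a (convexHull ℝ (Z : Set E))))) :=
  le_max_of_le_right <| angularDiam_le_of_subset_convexHull Z.finite_toSet.isBounded hd <|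
    Set.union_subset (subset_convexHull ℝ _) (Set.singleton_subset_iff.2 hv)

/-- Adding a barycentric point `v ∈ conv(Z)`, `v ≠ a`, to a finite nonempty cloud
`Z` separated from the reference point `a` (with `D_Z ≤ 2 · d_Z(a)`) does not
increase the angular diameter beyond
`max{α_Z(a), 2 · arcsin(D_Z / (2 · d_Z(a)))}`. -/
theorem angularDiam_insert_le_max
    {E : Type*} [NormedAddCommGroup E] [InnerProductSpace ℝ E]
    (Z : Finset E) (hZ : Z.Nonempty) (a : E)
    (hd : 0 < infDist a (convexHull ℝ (Z : Set E)))
    (hD : diam (Z : Set E) ≤ 2 * infDist a (convexHull ℝ (Z : Set E)))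
    (v : E) (hv : v ∈ convexHull ℝ (Z : Set E)) (hva : v ≠ a) :
    angularDiam a ((Z : Set E) ∪ {v}) ≤
      max (angularDiam a (Z : Set E))
        (2 * Real.arcsin
          (diam (Z : Set E) / (2 * infDist a (convexHull ℝ (Z : Set E))))) :=
  angularDiam_insert_le_max_general Z a hd v hv
end

section
/- For any two nonzero vectors u and w in a real inner product space, with θ = ∠(u, w) the angle between them, the following estimate holds: ‖u − w‖ ≥ 2·min(‖u‖, ‖w‖)·sin(θ/2). -/
open InnerProductGeometry

/-- For nonzero vectors `u`, `w` with angle `θ = ∠(u, w)`, one has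
`‖u − w‖ ≥ 2 · min(‖u‖, ‖w‖) · sin(θ / 2)`. -/
theorem norm_sub_ge_two_min_mul_sin_half_angle
    {E : Type*} [NormedAddCommGroup E] [InnerProductSpace ℝ E]
    (u w : E) (hu : u ≠ 0) (hw : w ≠ 0) :
    2 * min ‖u‖ ‖w‖ * Real.sin (angle u w / 2) ≤ ‖u - w‖ := by
  set θ := angle u w with hθ
  set a := ‖u‖
  set b := ‖w‖
  set m := min a b with hm
  have ha : 0 < a := norm_pos_iff.mpr hu
  have hb : 0 < b := norm_pos_iff.mpr hw
  have hma : m ≤ a := min_le_left _ _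
  have hmb : m ≤ b := min_le_right _ _
  have hm0 : 0 < m := lt_min ha hb
  have hθ0 : 0 ≤ θ := angle_nonneg u w
  have hθπ : θ ≤ Real.pi := angle_le_pi u w
  have hs : 0 ≤ Real.sin (θ / 2) :=
    Real.sin_nonneg_of_nonneg_of_le_pi (by linarith) (by linarith)
  have hc1 : Real.cos θ ≤ 1 := Real.cos_le_one θ
  have hinner : Real.cos θ * (a * b) = (inner ℝ u w : ℝ) :=
    cos_angle_mul_norm_mul_norm u w
  have hsq : Real.sin (θ / 2) ^ 2 = (1 - Real.cos θ) / 2 := by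
    have h := Real.cos_sq (θ / 2)
    rw [show 2 * (θ / 2) = θ by ring] at h
    have h2 := Real.sin_sq_add_cos_sq (θ / 2)
    linarith
  have hnorm : ‖u - w‖ ^ 2 = a ^ 2 - 2 * (inner ℝ u w : ℝ) + b ^ 2 :=
    norm_sub_sq_real u w
  have key : (2 * m * Real.sin (θ / 2)) ^ 2 ≤ ‖u - w‖ ^ 2 := by
    rw [hnorm, ← hinner]
    have hab : m * m ≤ a * b := mul_le_mul hma hmb hm0.le ha.le
    nlinarith [sq_nonneg (a - b), mul_nonneg (sub_nonneg.mpr hab) (sub_nonneg.mpr hc1)]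
  have hL : 0 ≤ 2 * m * Real.sin (θ / 2) := by positivity
  nlinarith [norm_nonneg (u - w), key, hL]
end

section
/- Let Z = {z_1, ..., z_N} be a finite nonempty set of points in a real inner product space (e.g. ℝ^r), let a be a reference point such that d_Z(a) = dist(a, conv(Z)) > 0, and let D_Z = diam(Z). Then for every point v ∈ conv(Z) with v ≠ a and every j = 1, ..., N, letting θ_j = ∠(v − a, z_j − a), the inequality 2·d_Z(a)·sin(θ_j/2) ≤ D_Z holds; equivalently, sin(θ_j/2) ≤ D_Z / (2·d_Z(a)). -/
open Metric InnerProductGeometry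

/-- If the finite nonempty cloud `Z` is separated from the reference point `a`
(positive distance `d_Z(a)` to the convex hull), then for every `v` in the convex
hull with `v ≠ a` and every `z ∈ Z`, writing `θ = ∠(v − a, z − a)`, one has
`2 · d_Z(a) · sin(θ / 2) ≤ D_Z`. -/
theorem two_infDist_mul_sin_half_angle_le_diam
    {E : Type*} [NormedAddCommGroup E] [InnerProductSpace ℝ E]
    (Z : Finset E) (hZ : Z.Nonempty) (a : E)
    (hd : 0 < infDist a (convexHull ℝ (Z : Set E))) :
    ∀ v ∈ convexHull ℝ (Z : Set E), v ≠ a → ∀ z ∈ Z,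
      2 * infDist a (convexHull ℝ (Z : Set E)) *
          Real.sin (angle (v - a) (z - a) / 2) ≤ diam (Z : Set E) := by
  intro v hv hva z hz
  set S := convexHull ℝ (Z : Set E) with hS
  set d := infDist a S with hdd
  have hzS : z ∈ S := subset_convexHull ℝ _ hz
  have hdv : d ≤ ‖v - a‖ := by
    have := infDist_le_dist_of_mem (x := a) hv
    rwa [dist_comm, dist_eq_norm] at this
  have hdz : d ≤ ‖z - a‖ := by
    have := infDist_le_dist_of_mem (x := a) hzS
    rwa [dist_comm, dist_eq_norm] at this
  set θ := angle (v - a) (z - a) with hθ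
  have hθ0 : 0 ≤ θ := angle_nonneg _ _
  have hθpi : θ ≤ Real.pi := angle_le_pi _ _
  have hs0 : 0 ≤ Real.sin (θ / 2) :=
    Real.sin_nonneg_of_nonneg_of_le_pi (by linarith) (by linarith [Real.pi_pos])
  have hcos : Real.cos θ = 1 - 2 * Real.sin (θ / 2) ^ 2 := by
    have h2 : θ = 2 * (θ / 2) := by ring
    rw [h2, Real.cos_two_mul, Real.cos_sq']
    ring
  have hinner : Real.cos θ * (‖v - a‖ * ‖z - a‖) = inner ℝ (v - a) (z - a) :=
    cos_angle_mul_norm_mul_norm _ _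
  have hnorm : ‖(v - a) - (z - a)‖ ^ 2
      = ‖v - a‖ ^ 2 - 2 * inner ℝ (v - a) (z - a) + ‖z - a‖ ^ 2 :=
    norm_sub_sq_real _ _
  have hkey : (2 * d * Real.sin (θ / 2)) ^ 2 ≤ ‖v - z‖ ^ 2 := by
    have hvz : (v - a) - (z - a) = v - z := by abel
    rw [← hvz, hnorm, ← hinner, hcos]
    nlinarith [sq_nonneg (‖v - a‖ - ‖z - a‖), Real.sin_le_one (θ / 2),
      mul_le_mul hdv hdz (le_of_lt hd) (norm_nonneg _), sq_nonneg (Real.sin (θ / 2)),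
      mul_nonneg (mul_nonneg (le_of_lt hd) (le_of_lt hd)) (sq_nonneg (Real.sin (θ / 2)))]
  have h1 : 2 * d * Real.sin (θ / 2) ≤ ‖v - z‖ := by
    have h0 : 0 ≤ 2 * d * Real.sin (θ / 2) :=
      mul_nonneg (by positivity) hs0
    nlinarith [norm_nonneg (v - z)]
  have h2 : ‖v - z‖ ≤ diam (Z : Set E) := by
    have hb : Bornology.IsBounded S := by
      rw [hS, isBounded_convexHull]
      exact Z.finite_toSet.isBounded
    have := dist_le_diam_of_mem hb hv hzS
    rw [hS, convexHull_diam] at this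
    rwa [dist_eq_norm] at this
  linarith
end
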